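/- With the notation below: (1) if b_0 ≡ b_1 ≡ b_2 ≡ b_3 ≡ 0 (mod 2), then D_4(b)·D_4(c) is 2^8 times an odd integer when b_0+b_1+b_2+b_3 ≡ c_0+c_1+c_2+c_3 ≡ 2 (mod 4), and is divisible by 2^12 otherwise; (2) if b_0 ≡ b_1 ≡ b_2 ≡ b_3 ≡ 1 (mod 2), then D_4(b)·D_4(c) is 2^8 times an odd integer when b_0+b_1+b_2+b_3 ≡ c_0+c_1+c_2+c_3 ≡ 2 (mod 4), and is divisible by 2^11 otherwise; (3) if b_0 ≡ b_2 ≢ b_1 ≡ b_3 (mod 2), then D_4(b)·D_4(c) is 2^10 times an odd integer when b_0−b_2 ≡ b_1−b_3 ≡ c_0−c_2 ≡ c_1−c_3 ≡ 2 (mod 4), and is divisible by 2^11 otherwise; (4) if b_0+b_2 ≡ b_1+b_3 ≡ 1 (mod 2), then D_4(b)·D_4(c) is 2^8 times an odd integer when (b_0+b_2)(b_1+b_3) ≡ ±3 (mod 8) and (c_0+c_2)(c_1+c_3) ≡ ±3 (mod 8), and is divisible by 2^9 otherwise. -/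

import Mathlib

open Matrix Complex

def D4 (x0 x1 x2 x3 : ℤ) : ℤ :=
  (Matrix.of ![![x0, x1, x2, x3], ![x3, x0, x1, x2], ![x2, x3, x0, x1], ![x1, x2, x3, x0]]).det

def bI (a : ℕ → ℤ) (i : ℕ) : ℤ := (a i + a (i + 8)) + (a (i + 4) + a (i + 12))

def cI (a : ℕ → ℤ) (i : ℕ) : ℤ := (a i + a (i + 8)) - (a (i + 4) + a (i + 12))

/-!
Write `x = (x₀, x₁, x₂, x₃)`. The circulant determinant factors as
`D₄(x) = ((x₀ + x₂)² - (x₁ + x₃)²) ((x₀ - x₂)² + (x₁ - x₃)²)`, and `bᵢ ≡ cᵢ (mod 2)`, so the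
parity hypothesis of each case holds for `b` and for `c` alike. It therefore suffices to show,
for a single vector `x` in each case, that `D₄(x)` is `2^k` times an odd number under the
"good" congruence and divisible by `2^l` (`l > k`) otherwise; the product then has valuation
exactly `2k`, or at least `k + l`.

In cases (1)–(3) `x₀ ≡ x₂` and `x₁ ≡ x₃`, so `x = (m + u, n + v, m - u, n - v)` and
`D₄(x) = 2⁴ (m² - n²)(u² + v²)`; the valuation is read off from the parities of `m, n, u, v`.
In case (4) the four linear forms are odd, `(x₀ - x₂)² + (x₁ - x₃)²` is twice an odd number,
and `m² - n²` (`m, n` odd) is `8` times an odd number exactly when `mn ≡ ±3 (mod 8)`.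
-/

theorem D4_eq (x0 x1 x2 x3 : ℤ) :
    D4 x0 x1 x2 x3 = ((x0 + x2) ^ 2 - (x1 + x3) ^ 2) * ((x0 - x2) ^ 2 + (x1 - x3) ^ 2) := by
  rw [D4, Matrix.det_succ_row_zero]
  simp [Fin.sum_univ_succ, Matrix.det_fin_three, Fin.succAbove]
  ring

theorem D4_add_sub (m n u v : ℤ) :
    D4 (m + u) (n + v) (m - u) (n - v) = 2 ^ 4 * ((m ^ 2 - n ^ 2) * (u ^ 2 + v ^ 2)) := by
  rw [D4_eq]
  ring

theorem bI_modEq_cI (a : ℕ → ℤ) (i : ℕ) : bI a i ≡ cI a i [ZMOD 2] :=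
  Int.modEq_iff_dvd.2 ⟨-(a (i + 4) + a (i + 12)), by rw [bI, cI]; ring⟩

theorem Int.exists_eq_add_sub_of_modEq_two {a b : ℤ} (h : a ≡ b [ZMOD 2]) :
    ∃ m u, a = m + u ∧ b = m - u := by
  unfold Int.ModEq at h
  exact ⟨(a + b) / 2, (a - b) / 2, by omega, by omega⟩

section Squares

variable {m n u v : ℤ}

theorem Int.four_dvd_sq_sub_sq (h : Even (m + n)) : 4 ∣ m ^ 2 - n ^ 2 := by
  have h' : Even (m - n) := by simpa [parity_simps] using h
  simpa [sq_sub_sq] using mul_dvd_mul h.two_dvd h'.two_dvd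

theorem Int.eight_dvd_sq_sub_sq (hm : Odd m) (hn : Odd n) : 8 ∣ m ^ 2 - n ^ 2 := by
  simpa only [sub_sub_sub_cancel_right] using
    dvd_sub (Int.eight_dvd_sq_sub_one_of_odd hm) (Int.eight_dvd_sq_sub_one_of_odd hn)

theorem Int.four_dvd_sq_add_sq (hu : Even u) (hv : Even v) : 4 ∣ u ^ 2 + v ^ 2 := by
  obtain ⟨a, rfl⟩ := hu
  obtain ⟨b, rfl⟩ := hv
  exact ⟨a ^ 2 + b ^ 2, by ring⟩

theorem Int.exists_odd_sq_add_sq (hu : Odd u) (hv : Odd v) :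
    ∃ w, Odd w ∧ u ^ 2 + v ^ 2 = 2 * w := by
  obtain ⟨a, rfl⟩ := hu
  obtain ⟨b, rfl⟩ := hv
  exact ⟨2 * (a ^ 2 + a + b ^ 2 + b) + 1, odd_two_mul_add_one _, by ring⟩

theorem Int.odd_sq_sub_sq (h : Odd (m + n)) : Odd (m ^ 2 - n ^ 2) := by
  simpa [parity_simps] using h

theorem Int.odd_sq_add_sq (h : Odd (u + v)) : Odd (u ^ 2 + v ^ 2) := by
  simpa [parity_simps] using h

theorem Int.sixteen_dvd_sq_sub_one_iff (k : ℤ) : 16 ∣ k ^ 2 - 1 ↔ k % 8 = 1 ∨ k % 8 = 7 := by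
  obtain ⟨q, r, hr0, hr16, rfl⟩ : ∃ q r, 0 ≤ r ∧ r < 16 ∧ k = 16 * q + r :=
    ⟨k / 16, k % 16, by omega, by omega, by omega⟩
  rw [show (16 * q + r) ^ 2 - 1 = 16 * (16 * q ^ 2 + 2 * q * r) + (r ^ 2 - 1) by ring,
    dvd_add_right (dvd_mul_right _ _)]
  interval_cases r <;> omega

theorem Int.sixteen_dvd_sq_sub_sq_iff (hm : Odd m) (hn : Odd n) :
    16 ∣ m ^ 2 - n ^ 2 ↔ ¬(m * n ≡ 3 [ZMOD 8] ∨ m * n ≡ -3 [ZMOD 8]) := by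
  have h16 : 16 ∣ (m * n) ^ 2 - 1 - (m ^ 2 - n ^ 2) := by
    obtain ⟨a, ha⟩ := Int.eight_dvd_sq_sub_one_of_odd hm
    obtain ⟨b, hb⟩ := Int.eight_dvd_sq_sub_one_of_odd hn
    -- `(mn)² - 1 - (m² - n²) = (m² - 1)(n² - 1) + 2(n² - 1)`
    exact ⟨4 * a * b + b, by linear_combination (n ^ 2 - 1) * ha + (8 * a + 2) * hb⟩
  have hmn := Int.odd_iff.1 (hm.mul hn)
  rw [← dvd_iff_dvd_of_dvd_sub h16, Int.sixteen_dvd_sq_sub_one_iff]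
  unfold Int.ModEq
  omega

theorem Int.exists_odd_sq_sub_sq_eq_eight_mul (hm : Odd m) (hn : Odd n)
    (h : m * n ≡ 3 [ZMOD 8] ∨ m * n ≡ -3 [ZMOD 8]) : ∃ s, Odd s ∧ m ^ 2 - n ^ 2 = 8 * s := by
  obtain ⟨s, hs⟩ := Int.eight_dvd_sq_sub_sq hm hn
  refine ⟨s, Int.not_even_iff_odd.1 fun ⟨t, ht⟩ => ?_, hs⟩
  exact (Int.sixteen_dvd_sq_sub_sq_iff hm hn).1 ⟨t, by rw [hs, ht]; ring⟩ h

end Squares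

def TwoAdicCases (P : Prop) (k l : ℕ) (x : ℤ) : Prop :=
  (P → ∃ t : ℤ, Odd t ∧ x = 2 ^ k * t) ∧ (¬P → (2 ^ l : ℤ) ∣ x)

namespace TwoAdicCases

variable {P Q : Prop} {k l : ℕ} {x y : ℤ}

theorem two_pow_dvd (h : TwoAdicCases P k l x) (hkl : k ≤ l) : (2 ^ k : ℤ) ∣ x := by
  by_cases hP : P
  · obtain ⟨t, -, rfl⟩ := h.1 hP
    exact dvd_mul_right _ _
  · exact (pow_dvd_pow 2 hkl).trans (h.2 hP)

theorem mul (hx : TwoAdicCases P k l x) (hy : TwoAdicCases Q k l y) (hkl : k ≤ l) :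
    TwoAdicCases (P ∧ Q) (k + k) (k + l) (x * y) := by
  refine ⟨fun ⟨hP, hQ⟩ => ?_, fun h => ?_⟩
  · obtain ⟨s, hs, rfl⟩ := hx.1 hP
    obtain ⟨t, ht, rfl⟩ := hy.1 hQ
    exact ⟨s * t, hs.mul ht, by ring⟩
  · rw [pow_add]
    rcases not_and_or.1 h with hP | hQ
    · rw [mul_comm x]
      exact mul_dvd_mul (hy.two_pow_dvd hkl) (hx.2 hP)
    · exact mul_dvd_mul (hx.two_pow_dvd hkl) (hy.2 hQ)

end TwoAdicCases

section SingleVector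

variable {x0 x1 x2 x3 : ℤ}

theorem D4_twoAdicCases_of_even
    (hx : x0 ≡ 0 [ZMOD 2] ∧ x1 ≡ 0 [ZMOD 2] ∧ x2 ≡ 0 [ZMOD 2] ∧ x3 ≡ 0 [ZMOD 2]) :
    TwoAdicCases (x0 + x1 + x2 + x3 ≡ 2 [ZMOD 4]) 4 8 (D4 x0 x1 x2 x3) := by
  obtain ⟨h0, h1, h2, h3⟩ := hx
  obtain ⟨m, u, rfl, rfl⟩ := Int.exists_eq_add_sub_of_modEq_two (h0.trans h2.symm)
  obtain ⟨n, v, rfl, rfl⟩ := Int.exists_eq_add_sub_of_modEq_two (h1.trans h3.symm)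
  unfold Int.ModEq at *
  rw [D4_add_sub]
  refine ⟨fun h => ⟨_, Int.odd_mul.2 ⟨Int.odd_sq_sub_sq (Int.odd_iff.2 (by omega)),
    Int.odd_sq_add_sq (Int.odd_iff.2 (by omega))⟩, rfl⟩, fun h => ?_⟩
  rw [show (2 : ℤ) ^ 8 = 2 ^ 4 * 16 by norm_num]
  refine mul_dvd_mul_left _ ?_
  -- `m, n, u, v` all have the same parity
  rcases Int.emod_two_eq_zero_or_one m with hm | hm
  · exact mul_dvd_mul (Int.four_dvd_sq_sub_sq (Int.even_iff.2 (by omega)))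
      (Int.four_dvd_sq_add_sq (Int.even_iff.2 (by omega)) (Int.even_iff.2 (by omega)))
  · obtain ⟨w, -, hw⟩ := Int.exists_odd_sq_add_sq (u := u) (v := v) (Int.odd_iff.2 (by omega))
      (Int.odd_iff.2 (by omega))
    rw [hw]
    exact mul_dvd_mul (Int.eight_dvd_sq_sub_sq (Int.odd_iff.2 hm) (Int.odd_iff.2 (by omega)))
      (dvd_mul_right 2 w)

theorem D4_twoAdicCases_of_odd
    (hx : x0 ≡ 1 [ZMOD 2] ∧ x1 ≡ 1 [ZMOD 2] ∧ x2 ≡ 1 [ZMOD 2] ∧ x3 ≡ 1 [ZMOD 2]) :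
    TwoAdicCases (x0 + x1 + x2 + x3 ≡ 2 [ZMOD 4]) 4 7 (D4 x0 x1 x2 x3) := by
  obtain ⟨h0, h1, h2, h3⟩ := hx
  obtain ⟨m, u, rfl, rfl⟩ := Int.exists_eq_add_sub_of_modEq_two (h0.trans h2.symm)
  obtain ⟨n, v, rfl, rfl⟩ := Int.exists_eq_add_sub_of_modEq_two (h1.trans h3.symm)
  unfold Int.ModEq at *
  rw [D4_add_sub]
  refine ⟨fun h => ⟨_, Int.odd_mul.2 ⟨Int.odd_sq_sub_sq (Int.odd_iff.2 (by omega)),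
    Int.odd_sq_add_sq (Int.odd_iff.2 (by omega))⟩, rfl⟩, fun h => ?_⟩
  rw [show (2 : ℤ) ^ 7 = 2 ^ 4 * 8 by norm_num]
  refine mul_dvd_mul_left _ ?_
  -- `m ≡ n` and `u ≡ v`, but `m ≢ u`
  rcases Int.emod_two_eq_zero_or_one m with hm | hm
  · obtain ⟨w, -, hw⟩ := Int.exists_odd_sq_add_sq (u := u) (v := v) (Int.odd_iff.2 (by omega))
      (Int.odd_iff.2 (by omega))
    rw [hw, show (8 : ℤ) = 4 * 2 by norm_num]
    exact mul_dvd_mul (Int.four_dvd_sq_sub_sq (Int.even_iff.2 (by omega))) (dvd_mul_right 2 w)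
  · exact (Int.eight_dvd_sq_sub_sq (Int.odd_iff.2 hm) (Int.odd_iff.2 (by omega))).mul_right _

theorem D4_twoAdicCases_of_modEq_of_not_modEq
    (hx : x0 ≡ x2 [ZMOD 2] ∧ x1 ≡ x3 [ZMOD 2] ∧ ¬x0 ≡ x1 [ZMOD 2]) :
    TwoAdicCases (x0 - x2 ≡ 2 [ZMOD 4] ∧ x1 - x3 ≡ 2 [ZMOD 4]) 5 6 (D4 x0 x1 x2 x3) := by
  obtain ⟨h02, h13, h01⟩ := hx
  obtain ⟨m, u, rfl, rfl⟩ := Int.exists_eq_add_sub_of_modEq_two h02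
  obtain ⟨n, v, rfl, rfl⟩ := Int.exists_eq_add_sub_of_modEq_two h13
  unfold Int.ModEq at *
  rw [D4_add_sub]
  -- `m + n + u + v = x₀ + x₁` is odd
  refine ⟨fun ⟨hu, hv⟩ => ?_, fun h => ?_⟩
  · obtain ⟨w, hw, hsum⟩ := Int.exists_odd_sq_add_sq (u := u) (v := v)
      (Int.odd_iff.2 (by omega)) (Int.odd_iff.2 (by omega))
    refine ⟨(m ^ 2 - n ^ 2) * w, (Int.odd_sq_sub_sq (Int.odd_iff.2 (by omega))).mul hw, ?_⟩
    rw [hsum]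
    ring
  · rw [show (2 : ℤ) ^ 6 = 2 ^ 4 * 4 by norm_num]
    refine mul_dvd_mul_left _ ?_
    rcases Int.emod_two_eq_zero_or_one (u + v) with huv | huv
    · exact (Int.four_dvd_sq_add_sq (Int.even_iff.2 (by omega))
        (Int.even_iff.2 (by omega))).mul_left _
    · exact (Int.four_dvd_sq_sub_sq (Int.even_iff.2 (by omega))).mul_right _

theorem D4_twoAdicCases_of_odd_add (hx : x0 + x2 ≡ 1 [ZMOD 2] ∧ x1 + x3 ≡ 1 [ZMOD 2]) :
    TwoAdicCases ((x0 + x2) * (x1 + x3) ≡ 3 [ZMOD 8] ∨ (x0 + x2) * (x1 + x3) ≡ -3 [ZMOD 8])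
      4 5 (D4 x0 x1 x2 x3) := by
  have hM : Odd (x0 + x2) := Int.odd_iff.2 hx.1
  have hN : Odd (x1 + x3) := Int.odd_iff.2 hx.2
  obtain ⟨w, hw, hsum⟩ := Int.exists_odd_sq_add_sq (u := x0 - x2) (v := x1 - x3)
    (by simpa [parity_simps] using hM) (by simpa [parity_simps] using hN)
  rw [D4_eq, hsum]
  refine ⟨fun h => ?_, fun h => ?_⟩
  · obtain ⟨s, hs, hs8⟩ := Int.exists_odd_sq_sub_sq_eq_eight_mul hM hN h
    exact ⟨s * w, hs.mul hw, by rw [hs8]; ring⟩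
  · obtain ⟨t, ht⟩ := (Int.sixteen_dvd_sq_sub_sq_iff hM hN).2 h
    exact ⟨t * w, by rw [ht]; ring⟩

end SingleVector

section Pairs

variable {x0 x1 x2 x3 y0 y1 y2 y3 : ℤ}

theorem D4_mul_D4_of_even (h0 : x0 ≡ y0 [ZMOD 2]) (h1 : x1 ≡ y1 [ZMOD 2])
    (h2 : x2 ≡ y2 [ZMOD 2]) (h3 : x3 ≡ y3 [ZMOD 2])
    (hx : x0 ≡ 0 [ZMOD 2] ∧ x1 ≡ 0 [ZMOD 2] ∧ x2 ≡ 0 [ZMOD 2] ∧ x3 ≡ 0 [ZMOD 2]) :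
    TwoAdicCases (x0 + x1 + x2 + x3 ≡ 2 [ZMOD 4] ∧ y0 + y1 + y2 + y3 ≡ 2 [ZMOD 4]) 8 12
      (D4 x0 x1 x2 x3 * D4 y0 y1 y2 y3) :=
  (D4_twoAdicCases_of_even hx).mul (D4_twoAdicCases_of_even ⟨h0.symm.trans hx.1,
    h1.symm.trans hx.2.1, h2.symm.trans hx.2.2.1, h3.symm.trans hx.2.2.2⟩) (by norm_num)

theorem D4_mul_D4_of_odd (h0 : x0 ≡ y0 [ZMOD 2]) (h1 : x1 ≡ y1 [ZMOD 2])
    (h2 : x2 ≡ y2 [ZMOD 2]) (h3 : x3 ≡ y3 [ZMOD 2])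
    (hx : x0 ≡ 1 [ZMOD 2] ∧ x1 ≡ 1 [ZMOD 2] ∧ x2 ≡ 1 [ZMOD 2] ∧ x3 ≡ 1 [ZMOD 2]) :
    TwoAdicCases (x0 + x1 + x2 + x3 ≡ 2 [ZMOD 4] ∧ y0 + y1 + y2 + y3 ≡ 2 [ZMOD 4]) 8 11
      (D4 x0 x1 x2 x3 * D4 y0 y1 y2 y3) :=
  (D4_twoAdicCases_of_odd hx).mul (D4_twoAdicCases_of_odd ⟨h0.symm.trans hx.1,
    h1.symm.trans hx.2.1, h2.symm.trans hx.2.2.1, h3.symm.trans hx.2.2.2⟩) (by norm_num)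

theorem D4_mul_D4_of_modEq_of_not_modEq (h0 : x0 ≡ y0 [ZMOD 2]) (h1 : x1 ≡ y1 [ZMOD 2])
    (h2 : x2 ≡ y2 [ZMOD 2]) (h3 : x3 ≡ y3 [ZMOD 2])
    (hx : x0 ≡ x2 [ZMOD 2] ∧ x1 ≡ x3 [ZMOD 2] ∧ ¬x0 ≡ x1 [ZMOD 2]) :
    TwoAdicCases (x0 - x2 ≡ 2 [ZMOD 4] ∧ x1 - x3 ≡ 2 [ZMOD 4] ∧
      y0 - y2 ≡ 2 [ZMOD 4] ∧ y1 - y3 ≡ 2 [ZMOD 4]) 10 11 (D4 x0 x1 x2 x3 * D4 y0 y1 y2 y3) := by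
  have hy : y0 ≡ y2 [ZMOD 2] ∧ y1 ≡ y3 [ZMOD 2] ∧ ¬y0 ≡ y1 [ZMOD 2] :=
    ⟨h0.symm.trans (hx.1.trans h2), h1.symm.trans (hx.2.1.trans h3),
      fun h => hx.2.2 (h0.trans (h.trans h1.symm))⟩
  simpa only [and_assoc] using (D4_twoAdicCases_of_modEq_of_not_modEq hx).mul
    (D4_twoAdicCases_of_modEq_of_not_modEq hy) (by norm_num)

theorem D4_mul_D4_of_odd_add (h0 : x0 ≡ y0 [ZMOD 2]) (h1 : x1 ≡ y1 [ZMOD 2])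
    (h2 : x2 ≡ y2 [ZMOD 2]) (h3 : x3 ≡ y3 [ZMOD 2])
    (hx : x0 + x2 ≡ 1 [ZMOD 2] ∧ x1 + x3 ≡ 1 [ZMOD 2]) :
    TwoAdicCases (((x0 + x2) * (x1 + x3) ≡ 3 [ZMOD 8] ∨ (x0 + x2) * (x1 + x3) ≡ -3 [ZMOD 8]) ∧
      ((y0 + y2) * (y1 + y3) ≡ 3 [ZMOD 8] ∨ (y0 + y2) * (y1 + y3) ≡ -3 [ZMOD 8])) 8 9
      (D4 x0 x1 x2 x3 * D4 y0 y1 y2 y3) :=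
  (D4_twoAdicCases_of_odd_add hx).mul (D4_twoAdicCases_of_odd_add
    ⟨(h0.add h2).symm.trans hx.1, (h1.add h3).symm.trans hx.2⟩) (by norm_num)

end Pairs

theorem stmt16 (a : ℕ → ℤ) :
    ((bI a 0 ≡ 0 [ZMOD 2] ∧ bI a 1 ≡ 0 [ZMOD 2] ∧ bI a 2 ≡ 0 [ZMOD 2] ∧ bI a 3 ≡ 0 [ZMOD 2]) →
      ((bI a 0 + bI a 1 + bI a 2 + bI a 3 ≡ 2 [ZMOD 4] ∧
          cI a 0 + cI a 1 + cI a 2 + cI a 3 ≡ 2 [ZMOD 4]) →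
        ∃ t : ℤ, Odd t ∧
          D4 (bI a 0) (bI a 1) (bI a 2) (bI a 3) * D4 (cI a 0) (cI a 1) (cI a 2) (cI a 3) =
            2 ^ 8 * t) ∧
      (¬ (bI a 0 + bI a 1 + bI a 2 + bI a 3 ≡ 2 [ZMOD 4] ∧
            cI a 0 + cI a 1 + cI a 2 + cI a 3 ≡ 2 [ZMOD 4]) →
        (2 ^ 12 : ℤ) ∣
          D4 (bI a 0) (bI a 1) (bI a 2) (bI a 3) * D4 (cI a 0) (cI a 1) (cI a 2) (cI a 3))) ∧
    ((bI a 0 ≡ 1 [ZMOD 2] ∧ bI a 1 ≡ 1 [ZMOD 2] ∧ bI a 2 ≡ 1 [ZMOD 2] ∧ bI a 3 ≡ 1 [ZMOD 2]) →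
      ((bI a 0 + bI a 1 + bI a 2 + bI a 3 ≡ 2 [ZMOD 4] ∧
          cI a 0 + cI a 1 + cI a 2 + cI a 3 ≡ 2 [ZMOD 4]) →
        ∃ t : ℤ, Odd t ∧
          D4 (bI a 0) (bI a 1) (bI a 2) (bI a 3) * D4 (cI a 0) (cI a 1) (cI a 2) (cI a 3) =
            2 ^ 8 * t) ∧
      (¬ (bI a 0 + bI a 1 + bI a 2 + bI a 3 ≡ 2 [ZMOD 4] ∧
            cI a 0 + cI a 1 + cI a 2 + cI a 3 ≡ 2 [ZMOD 4]) →
        (2 ^ 11 : ℤ) ∣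
          D4 (bI a 0) (bI a 1) (bI a 2) (bI a 3) * D4 (cI a 0) (cI a 1) (cI a 2) (cI a 3))) ∧
    ((bI a 0 ≡ bI a 2 [ZMOD 2] ∧ bI a 1 ≡ bI a 3 [ZMOD 2] ∧ ¬ (bI a 0 ≡ bI a 1 [ZMOD 2])) →
      ((bI a 0 - bI a 2 ≡ 2 [ZMOD 4] ∧ bI a 1 - bI a 3 ≡ 2 [ZMOD 4] ∧
          cI a 0 - cI a 2 ≡ 2 [ZMOD 4] ∧ cI a 1 - cI a 3 ≡ 2 [ZMOD 4]) →
        ∃ t : ℤ, Odd t ∧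
          D4 (bI a 0) (bI a 1) (bI a 2) (bI a 3) * D4 (cI a 0) (cI a 1) (cI a 2) (cI a 3) =
            2 ^ 10 * t) ∧
      (¬ (bI a 0 - bI a 2 ≡ 2 [ZMOD 4] ∧ bI a 1 - bI a 3 ≡ 2 [ZMOD 4] ∧
            cI a 0 - cI a 2 ≡ 2 [ZMOD 4] ∧ cI a 1 - cI a 3 ≡ 2 [ZMOD 4]) →
        (2 ^ 11 : ℤ) ∣
          D4 (bI a 0) (bI a 1) (bI a 2) (bI a 3) * D4 (cI a 0) (cI a 1) (cI a 2) (cI a 3))) ∧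
    ((bI a 0 + bI a 2 ≡ 1 [ZMOD 2] ∧ bI a 1 + bI a 3 ≡ 1 [ZMOD 2]) →
      ((((bI a 0 + bI a 2) * (bI a 1 + bI a 3) ≡ 3 [ZMOD 8] ∨
            (bI a 0 + bI a 2) * (bI a 1 + bI a 3) ≡ -3 [ZMOD 8]) ∧
          ((cI a 0 + cI a 2) * (cI a 1 + cI a 3) ≡ 3 [ZMOD 8] ∨
            (cI a 0 + cI a 2) * (cI a 1 + cI a 3) ≡ -3 [ZMOD 8])) →
        ∃ t : ℤ, Odd t ∧
          D4 (bI a 0) (bI a 1) (bI a 2) (bI a 3) * D4 (cI a 0) (cI a 1) (cI a 2) (cI a 3) =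
            2 ^ 8 * t) ∧
      (¬ (((bI a 0 + bI a 2) * (bI a 1 + bI a 3) ≡ 3 [ZMOD 8] ∨
              (bI a 0 + bI a 2) * (bI a 1 + bI a 3) ≡ -3 [ZMOD 8]) ∧
            ((cI a 0 + cI a 2) * (cI a 1 + cI a 3) ≡ 3 [ZMOD 8] ∨
              (cI a 0 + cI a 2) * (cI a 1 + cI a 3) ≡ -3 [ZMOD 8])) →
        (2 ^ 9 : ℤ) ∣
          D4 (bI a 0) (bI a 1) (bI a 2) (bI a 3) * D4 (cI a 0) (cI a 1) (cI a 2) (cI a 3))) := by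
  have h i := bI_modEq_cI a i
  exact ⟨D4_mul_D4_of_even (h 0) (h 1) (h 2) (h 3), D4_mul_D4_of_odd (h 0) (h 1) (h 2) (h 3),
    D4_mul_D4_of_modEq_of_not_modEq (h 0) (h 1) (h 2) (h 3),
    D4_mul_D4_of_odd_add (h 0) (h 1) (h 2) (h 3)⟩
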